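/- arXiv:2103.07331 — 2 statements merged into one kernel-verified Lean document; each statement's English description precedes it below -/
import Mathlib

section
/- Let μ⁽¹⁾ and μ⁽²⁾ be probability measures on ℝᵈ, each satisfying the FKG inequality (i.e., μ(fg) ≥ μ(f)μ(g) for all bounded measurable increasing functions f, g), and suppose μ⁽¹⁾ ≼ μ⁽²⁾ in the stochastic order (μ⁽¹⁾(f) ≤ μ⁽²⁾(f) for all bounded measurable increasing f). Then the mixture μ = ½(μ⁽¹⁾ + μ⁽²⁾) also satisfies the FKG inequality. -/
open MeasureTheory ENNReal

/-- A probability measure on `ℝᵈ` satisfies the FKG inequality if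
`μ(fg) ≥ μ(f)μ(g)` for all bounded measurable increasing `f, g`. -/
def IsFKG {d : ℕ} (μ : Measure (Fin d → ℝ)) : Prop :=
  ∀ f g : (Fin d → ℝ) → ℝ, Measurable f → Measurable g → Monotone f → Monotone g →
    (∃ C, ∀ x, |f x| ≤ C) → (∃ C, ∀ x, |g x| ≤ C) →
    (∫ x, f x ∂μ) * (∫ x, g x ∂μ) ≤ ∫ x, f x * g x ∂μ

/-- Stochastic order: `μ ≼ ν` iff `μ(f) ≤ ν(f)` for all bounded measurable increasing `f`. -/
def StochLE {d : ℕ} (μ ν : Measure (Fin d → ℝ)) : Prop :=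
  ∀ f : (Fin d → ℝ) → ℝ, Measurable f → Monotone f → (∃ C, ∀ x, |f x| ≤ C) →
    ∫ x, f x ∂μ ≤ ∫ x, f x ∂ν

lemma integrable_of_bdd {d : ℕ} (μ : Measure (Fin d → ℝ)) [IsFiniteMeasure μ]
    (f : (Fin d → ℝ) → ℝ) (hf : Measurable f) (C : ℝ) (hC : ∀ x, |f x| ≤ C) :
    Integrable f μ := by
  refine ⟨hf.aestronglyMeasurable, ?_⟩
  apply MeasureTheory.HasFiniteIntegral.of_bounded (C := C)
  exact Filter.Eventually.of_forall fun x => (by simpa using hC x)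

theorem stmt_0 {d : ℕ} (μ1 μ2 : Measure (Fin d → ℝ))
    [IsProbabilityMeasure μ1] [IsProbabilityMeasure μ2]
    (h1 : IsFKG μ1) (h2 : IsFKG μ2) (h12 : StochLE μ1 μ2) :
    IsFKG ((2 : ℝ≥0∞)⁻¹ • μ1 + (2 : ℝ≥0∞)⁻¹ • μ2) := by
  intro f g hf hg hfm hgm hfb hgb
  obtain ⟨Cf, hCf⟩ := hfb
  obtain ⟨Cg, hCg⟩ := hgb
  have hfg : ∀ x, |f x * g x| ≤ |Cf| * |Cg| := by
    intro x
    rw [abs_mul]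
    exact mul_le_mul ((hCf x).trans (le_abs_self _)) ((hCg x).trans (le_abs_self _))
      (abs_nonneg _) (abs_nonneg _)
  have if1 := integrable_of_bdd μ1 f hf Cf hCf
  have if2 := integrable_of_bdd μ2 f hf Cf hCf
  have ig1 := integrable_of_bdd μ1 g hg Cg hCg
  have ig2 := integrable_of_bdd μ2 g hg Cg hCg
  have ifg1 := integrable_of_bdd μ1 (fun x => f x * g x) (hf.mul hg) _ hfg
  have ifg2 := integrable_of_bdd μ2 (fun x => f x * g x) (hf.mul hg) _ hfg
  have key : ∀ (h : (Fin d → ℝ) → ℝ), Integrable h μ1 → Integrable h μ2 →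
      ∫ x, h x ∂((2 : ℝ≥0∞)⁻¹ • μ1 + (2 : ℝ≥0∞)⁻¹ • μ2)
        = 2⁻¹ * ∫ x, h x ∂μ1 + 2⁻¹ * ∫ x, h x ∂μ2 := by
    intro h hi1 hi2
    rw [integral_add_measure (hi1.smul_measure (by simp)) (hi2.smul_measure (by simp)),
      integral_smul_measure, integral_smul_measure]
    norm_num
  rw [key f if1 if2, key g ig1 ig2, key _ ifg1 ifg2]
  have A := h1 f g hf hg hfm hgm ⟨Cf, hCf⟩ ⟨Cg, hCg⟩
  have B := h2 f g hf hg hfm hgm ⟨Cf, hCf⟩ ⟨Cg, hCg⟩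
  have Hf := h12 f hf hfm ⟨Cf, hCf⟩
  have Hg := h12 g hg hgm ⟨Cg, hCg⟩
  nlinarith [mul_nonneg (sub_nonneg.2 Hf) (sub_nonneg.2 Hg)]
end

section
/- Let ν ≼ μ be probability measures on ℝᵈ with equal i-th one-dimensional marginals ν_i = μ_i, and let π be a coupling of (ν, μ) with π({x ≤ y}) = 1. Then xᵢ = yᵢ π-almost surely. -/
open MeasureTheory

/-- If `ν ≼ μ` have equal `i`-th marginals and `π` is a coupling of `(ν, μ)` supported on
`{x ≤ y}`, then `xᵢ = yᵢ` π-a.s. -/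
theorem stmt_17 {d : ℕ} (i : Fin d) (μ ν : Measure (Fin d → ℝ))
    [IsProbabilityMeasure μ] [IsProbabilityMeasure ν]
    (hord : StochLE ν μ)
    (hmarg : ν.map (fun x => x i) = μ.map (fun x => x i))
    (π : Measure ((Fin d → ℝ) × (Fin d → ℝ))) [IsProbabilityMeasure π]
    (hfst : π.map Prod.fst = ν) (hsnd : π.map Prod.snd = μ)
    (hle : π {p | p.1 ≤ p.2} = 1) :
    ∀ᵐ p ∂π, p.1 i = p.2 i := by
  set g : ((Fin d → ℝ) × (Fin d → ℝ)) → ℝ :=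
    fun p => Real.arctan (p.2 i) - Real.arctan (p.1 i) with hg
  have hm1 : Measurable fun p : (Fin d → ℝ) × (Fin d → ℝ) => Real.arctan (p.1 i) :=
    Real.measurable_arctan.comp ((measurable_pi_apply i).comp measurable_fst)
  have hm2 : Measurable fun p : (Fin d → ℝ) × (Fin d → ℝ) => Real.arctan (p.2 i) :=
    Real.measurable_arctan.comp ((measurable_pi_apply i).comp measurable_snd)
  have hmeas : Measurable g := hm2.sub hm1
  have hboundfun : ∀ (f : ((Fin d → ℝ) × (Fin d → ℝ)) → ℝ), Measurable f →
      (∀ p, |f p| ≤ Real.pi) → Integrable f π := by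
    intro f hf hb
    refine (integrable_const Real.pi).mono' hf.aestronglyMeasurable ?_
    exact Filter.Eventually.of_forall fun p => hb p
  have habs : ∀ x : ℝ, |Real.arctan x| ≤ Real.pi := fun x => by
    have h1 := Real.arctan_lt_pi_div_two x
    have h2 := Real.neg_pi_div_two_lt_arctan x
    rw [abs_le]; constructor <;> nlinarith [Real.pi_pos]
  have hint1 : Integrable (fun p : (Fin d → ℝ) × (Fin d → ℝ) => Real.arctan (p.1 i)) π :=
    hboundfun _ hm1 fun p => habs _
  have hint2 : Integrable (fun p : (Fin d → ℝ) × (Fin d → ℝ) => Real.arctan (p.2 i)) π :=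
    hboundfun _ hm2 fun p => habs _
  have hint : Integrable g π := hint2.sub hint1
  have hnonneg : 0 ≤ᵐ[π] g := by
    have hAE : ∀ᵐ p ∂π, p.1 ≤ p.2 := by
      rw [MeasureTheory.ae_iff]
      have hms : MeasurableSet {p : (Fin d → ℝ) × (Fin d → ℝ) | p.1 ≤ p.2} :=
        measurableSet_le measurable_fst measurable_snd
      have : {p : (Fin d → ℝ) × (Fin d → ℝ) | ¬ p.1 ≤ p.2} = {p | p.1 ≤ p.2}ᶜ := rfl
      rw [this, measure_compl hms (measure_ne_top _ _), hle]
      simp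
    filter_upwards [hAE] with p hp
    simpa [hg] using Real.arctan_strictMono.monotone (hp i)
  have e1 : ∫ p, Real.arctan (p.1 i) ∂π = ∫ x, Real.arctan x ∂(ν.map (fun x => x i)) := by
    have hmi : Measurable fun x : Fin d → ℝ => Real.arctan (x i) :=
      Real.measurable_arctan.comp (measurable_pi_apply i)
    rw [← hfst, integral_map (measurable_pi_apply i).aemeasurable
      Real.measurable_arctan.aestronglyMeasurable,
      integral_map measurable_fst.aemeasurable hmi.aestronglyMeasurable]
  have e2 : ∫ p, Real.arctan (p.2 i) ∂π = ∫ x, Real.arctan x ∂(μ.map (fun x => x i)) := by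
    have hmi : Measurable fun x : Fin d → ℝ => Real.arctan (x i) :=
      Real.measurable_arctan.comp (measurable_pi_apply i)
    rw [← hsnd, integral_map (measurable_pi_apply i).aemeasurable
      Real.measurable_arctan.aestronglyMeasurable,
      integral_map measurable_snd.aemeasurable hmi.aestronglyMeasurable]
  have hzero : ∫ p, g p ∂π = 0 := by
    rw [hg]
    rw [integral_sub hint2 hint1, e1, e2, hmarg, sub_self]
  have hg0 : g =ᵐ[π] 0 := by
    have := (integral_eq_zero_iff_of_nonneg_ae hnonneg hint).mp hzero
    exact this
  filter_upwards [hg0, hnonneg] with p hp _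
  have : Real.arctan (p.2 i) = Real.arctan (p.1 i) := by
    have : g p = 0 := hp
    simpa [hg, sub_eq_zero] using this
  exact (Real.arctan_injective this).symm
end
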